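/- Let j be an integer with (m+3)/2 ≤ j ≤ m and set t_{(j)} := v_{2m+3−j} v_{2m+4−j} ⋯ v_{m+j} ∈ Cl(V). Then for every L ⊆ {1, …, m}: t_{(j)} · w_L = 0 unless {m+2−j, …, j−1} ⊆ L; and if L = K_1 ∪ {m+2−j, …, j−1} ∪ K_2 with K_1 ⊆ {1, …, m+1−j} and K_2 ⊆ {j, …, m}, then t_{(j)} · w_L = (−1)^(m|K_1|) (Π_{p=m+2−j}^{j−1} ε(p)) w_{K_1 ∪ K_2}. -/

import Mathlib

/-!
Formalization of a statement from "A Landau-Ginzburg model for Lagrangian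
Grassmannians, Langlands duality, and relations in quantum cohomology"
(arXiv:1304.4958).

Conventions: `V = ℂ^(2m+1)` with 0-based coordinates (`a : Fin (2m+1)`
corresponds to the paper's 1-based basis index `i = a+1`);
`ε(i) = (−1)^(m+1−i)`, written as `(−1)^(m+1+i)` which has the same parity.
-/

noncomputable section
open scoped BigOperators

def eps (m i : ℕ) : ℂ := (-1 : ℂ) ^ (m + 1 + i)

/-- The spin representation `V_Spin = ⋀•W`, modelled by coordinates with respect to its
basis `{w_I}` indexed by the subsets `I ⊆ {1,…,m}` (encoded as `Finset (Fin m)`: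
the element `a : Fin m` stands for the paper index `a+1`, i.e. the basis vector
`v_{a+1}` of `W`). -/
abbrev VS (m : ℕ) := Finset (Fin m) → ℂ

/-- The basis vector `w_I` of `V_Spin`. -/
def wB {m : ℕ} (I : Finset (Fin m)) : VS m := fun L => if L = I then 1 else 0

/-- The action of `v_{a+1}` (for `a : Fin m`) on `V_Spin`, i.e. wedging with `v_{a+1}`:
`v_{a+1} ⋅ w_L = (−1)^{#{l ∈ L : l < a}} w_{L ∪ {a}}` if `a ∉ L`, and `0` otherwise. -/
def crtF (m : ℕ) (a : Fin m) : Module.End ℂ (VS m) :=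
  Matrix.mulVecLin (Matrix.of fun L' L : Finset (Fin m) =>
    if a ∈ L' ∧ L = L'.erase a then (-1 : ℂ) ^ ((L'.filter (· < a)).card) else 0)

/-- The action of `v̄_{a+1}` (for `a : Fin m`) on `V_Spin`: the interior product
(insertion operator) contracting with the linear form `2Φ(v̄_{a+1}, −)` on `W`. -/
def annF (m : ℕ) (a : Fin m) : Module.End ℂ (VS m) :=
  Matrix.mulVecLin (Matrix.of fun L' L : Finset (Fin m) =>
    if a ∈ L ∧ L' = L.erase a then
      (-1 : ℂ) ^ ((L.filter (· < a)).card) * eps m ((a : ℕ) + 1) else 0)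

/-- The action of `v_{m+1}` on `V_Spin`: multiplication by `(−1)^k/√2` on `⋀^k W`. -/
def midF (m : ℕ) : Module.End ℂ (VS m) :=
  Matrix.mulVecLin (Matrix.of fun L' L : Finset (Fin m) =>
    if L' = L then (-1 : ℂ) ^ (L.card) * (((Real.sqrt 2 : ℝ) : ℂ))⁻¹ else 0)

/-- The action on `V_Spin` of the Clifford generator `v_i`, for a paper index
`i ∈ {1,…,2m+1}`: wedging for `i ≤ m`, the scalar `(−1)^k/√2` for `i = m+1`, and
the insertion operator for `v̄_{2m+2−i}` when `i ≥ m+2`. -/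
def genOpF (m : ℕ) (i : ℕ) : Module.End ℂ (VS m) :=
  if h : 1 ≤ i ∧ i ≤ m then crtF m ⟨i - 1, by omega⟩
  else if i = m + 1 then midF m
  else if h2 : m + 2 ≤ i ∧ i ≤ 2 * m + 1 then annF m ⟨2 * m + 1 - i, by omega⟩
  else 0

/-- The action on `V_Spin` of the ordered product `v_K = v_{k_1} v_{k_2} ⋯ v_{k_r}` of
Clifford generators, for a set of paper indices `K = {k_1 < ⋯ < k_r} ⊆ {1,…,2m+1}`. -/
def prodOpF (m : ℕ) (K : Finset ℕ) : Module.End ℂ (VS m) :=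
  ((K.sort (· ≤ ·)).map (genOpF m)).prod

/-- The subset of `Fin m` corresponding to a set `I ⊆ {1,…,m}` of paper basis indices of
`W` (paper index `i` corresponds to `a : Fin m` with `a + 1 = i`). -/
def IdxF (m : ℕ) (I : Finset ℕ) : Finset (Fin m) :=
  Finset.univ.filter (fun a => (a : ℕ) + 1 ∈ I)

/-! ### Auxiliary lemmas -/

private lemma sortIcc (a b : ℕ) :
    (Finset.Icc a b).sort (· ≤ ·) = List.range' a (b + 1 - a) := by
  apply List.Perm.eq_of_pairwise' (Finset.pairwise_sort _ _)
    ((List.pairwise_lt_range' (s := a)).imp le_of_lt)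
  apply Multiset.coe_eq_coe.mp
  rw [Finset.sort_eq, Nat.Icc_eq_range']

private lemma negOnePow_par (x y : ℕ) (h : x % 2 = y % 2) : (-1 : ℂ) ^ x = (-1 : ℂ) ^ y := by
  conv_lhs => rw [← Nat.div_add_mod x 2]
  conv_rhs => rw [← Nat.div_add_mod y 2]
  rw [pow_add, pow_add, pow_mul, pow_mul, neg_one_sq, one_pow, one_pow, h]

private lemma annF_wB (m : ℕ) (a : Fin m) (L : Finset (Fin m)) :
    annF m a (wB L) = if a ∈ L then
      (((-1:ℂ)^((L.filter (· < a)).card) * eps m ((a:ℕ)+1)) • wB (L.erase a) : VS m) else 0 := by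
  funext L'
  simp only [annF, Matrix.mulVecLin_apply, Matrix.mulVec, dotProduct, Matrix.of_apply, wB,
    mul_ite, mul_one, mul_zero, ite_mul, zero_mul]
  rw [Finset.sum_ite_eq' Finset.univ L]
  by_cases h : a ∈ L <;> simp [h, wB, Pi.smul_apply, smul_eq_mul]

/-- The set of `a : Fin m` with `m+1-j ≤ a < m+1-j+n` (paper indices `m+2-j,…,m+1-j+n`). -/
private def Pset (m j n : ℕ) : Finset (Fin m) :=
  Finset.univ.filter (fun a => m + 1 - j ≤ (a : ℕ) ∧ (a : ℕ) < m + 1 - j + n)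

private lemma Pset_zero (m j : ℕ) : Pset m j 0 = ∅ := by
  ext x
  simp only [Pset, Finset.mem_filter, Finset.mem_univ, true_and, Finset.notMem_empty, iff_false, not_and, not_lt]
  omega

private lemma Pset_succ (m j n : ℕ) (h : m + 1 - j + n < m) :
    Pset m j (n+1) = insert (⟨m + 1 - j + n, h⟩ : Fin m) (Pset m j n) := by
  ext x
  simp only [Pset, Finset.mem_filter, Finset.mem_univ, true_and, Finset.mem_insert, Fin.ext_iff]
  omega

private lemma Pset_card (m j : ℕ) : ∀ n, m + 1 - j + n ≤ m → (Pset m j n).card = n := by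
  intro n
  induction n with
  | zero => intro _; simp [Pset_zero]
  | succ n ih =>
    intro h
    have h' : m + 1 - j + n < m := by omega
    rw [Pset_succ m j n h', Finset.card_insert_of_notMem, ih (by omega)]
    simp [Pset]

private lemma Pset_mono (m j : ℕ) {n n' : ℕ} (h : n ≤ n') : Pset m j n ⊆ Pset m j n' := by
  intro x; simp only [Pset, Finset.mem_filter, Finset.mem_univ, true_and]; omega

private lemma key (m j : ℕ) (hm : 2 ≤ m) (hj : m + 3 ≤ 2 * j) (hjm : j ≤ m) :
    ∀ n, n ≤ 2 * j - m - 2 → ∀ L : Finset (Fin m),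
    ((List.range' (m + j + 1 - n) n).map (genOpF m)).prod (wB L) =
    if Pset m j n ⊆ L
    then (∏ k ∈ Finset.range n,
        ((-1:ℂ) ^ ((L.filter (fun x : Fin m => (x:ℕ) < m + 1 - j + k)).card + k) * eps m (m + 2 - j + k)))
        • wB (L \ Pset m j n)
    else 0 := by
  intro n
  induction n with
  | zero =>
    intro _ L
    simp [Pset_zero]
  | succ n ih =>
    intro hn L
    have hn' : n ≤ 2 * j - m - 2 := by omega
    have ham : m + 1 - j + n < m := by omega
    set a : Fin m := (⟨m + 1 - j + n, ham⟩ : Fin m) with ha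
    have hav : (a : ℕ) = m + 1 - j + n := rfl
    have hr : List.range' (m + j + 1 - (n+1)) (n+1) = (m + j - n) :: List.range' (m + j + 1 - n) n := by
      have h1 : m + j + 1 - (n+1) = m + j - n := by omega
      have h2 : m + j - n + 1 = m + j + 1 - n := by omega
      rw [h1, List.range'_succ, h2]
    have hgen : genOpF m (m + j - n) = annF m a := by
      rw [genOpF, dif_neg (by omega), if_neg (by omega), dif_pos (by omega)]
      congr 1
      apply Fin.ext
      show 2 * m + 1 - (m + j - n) = m + 1 - j + n
      omega
    rw [hr, List.map_cons, List.prod_cons, Module.End.mul_apply, ih hn', hgen]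
    have haP : a ∉ Pset m j n := by simp only [Pset, Finset.mem_filter, Finset.mem_univ, true_and, not_and, not_lt]; omega
    by_cases hsub : Pset m j n ⊆ L
    · rw [if_pos hsub, map_smul, annF_wB]
      by_cases hL : a ∈ L
      · have haM : a ∈ L \ Pset m j n := Finset.mem_sdiff.mpr ⟨hL, haP⟩
        rw [if_pos haM]
        have hsub' : Pset m j (n+1) ⊆ L := by
          rw [Pset_succ m j n ham]
          exact Finset.insert_subset hL hsub
        rw [if_pos hsub']
        have herase : (L \ Pset m j n).erase a = L \ Pset m j (n+1) := by
          rw [Pset_succ m j n ham, Finset.sdiff_insert]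
        have hfil : (L \ Pset m j n).filter (· < a) =
            (L.filter (fun x : Fin m => (x:ℕ) < m + 1 - j + n)) \ Pset m j n := by
          ext x
          simp only [Finset.mem_filter, Finset.mem_sdiff, Pset, Finset.mem_univ, true_and,
            Fin.lt_def, hav]
          tauto
        have hPfil : Pset m j n ⊆ L.filter (fun x : Fin m => (x:ℕ) < m + 1 - j + n) := by
          intro x hx
          have hx' := hx
          simp only [Pset, Finset.mem_filter, Finset.mem_univ, true_and] at hx'
          exact Finset.mem_filter.mpr ⟨hsub hx, hx'.2⟩
        have hcard : ((L \ Pset m j n).filter (· < a)).card =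
            (L.filter (fun x : Fin m => (x:ℕ) < m + 1 - j + n)).card - n := by
          rw [hfil, Finset.card_sdiff_of_subset hPfil, Pset_card m j n (by omega)]
        have hge : n ≤ (L.filter (fun x : Fin m => (x:ℕ) < m + 1 - j + n)).card := by
          calc n = (Pset m j n).card := (Pset_card m j n (by omega)).symm
          _ ≤ _ := Finset.card_le_card hPfil
        rw [herase, hcard]
        rw [smul_smul, Finset.prod_range_succ]
        congr 1
        have heps : ((a:ℕ) + 1) = m + 2 - j + n := by omega
        rw [heps]
        congr 1
        congr 1
        apply negOnePow_par
        omega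
      · have haM : a ∉ L \ Pset m j n := fun h => hL (Finset.mem_sdiff.mp h).1
        rw [if_neg haM, smul_zero]
        have : ¬ Pset m j (n+1) ⊆ L := by
          intro h
          exact hL (h (by rw [Pset_succ m j n ham]; exact Finset.mem_insert_self _ _))
        rw [if_neg this]
    · rw [if_neg hsub, map_zero]
      have : ¬ Pset m j (n+1) ⊆ L := fun h => hsub ((Pset_mono m j (by omega)).trans h)
      rw [if_neg this]
/-- Let `(m+3)/2 ≤ j ≤ m` and `t_{(j)} = v_{2m+3−j} v_{2m+4−j} ⋯ v_{m+j}`.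
Then for every `L ⊆ {1,…,m}`: `t_{(j)} · w_L = 0` unless `{m+2−j,…,j−1} ⊆ L`; and if
`L = K_1 ∪ {m+2−j,…,j−1} ∪ K_2` with `K_1 ⊆ {1,…,m+1−j}` and `K_2 ⊆ {j,…,m}`, then
`t_{(j)} · w_L = (−1)^(m|K_1|) (Π_{p=m+2−j}^{j−1} ε(p)) w_{K_1 ∪ K_2}`. -/
theorem tj_action (m j : ℕ) (hm : 2 ≤ m) (hj : m + 3 ≤ 2 * j) (hjm : j ≤ m) :
    (∀ L : Finset (Fin m), ¬ IdxF m (Finset.Icc (m + 2 - j) (j - 1)) ⊆ L →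
        prodOpF m (Finset.Icc (2 * m + 3 - j) (m + j)) (wB L) = 0) ∧
    (∀ K1 K2 : Finset (Fin m),
        K1 ⊆ IdxF m (Finset.Icc 1 (m + 1 - j)) → K2 ⊆ IdxF m (Finset.Icc j m) →
        prodOpF m (Finset.Icc (2 * m + 3 - j) (m + j))
            (wB (K1 ∪ IdxF m (Finset.Icc (m + 2 - j) (j - 1)) ∪ K2))
          = ((-1 : ℂ) ^ (m * K1.card) * ∏ p ∈ Finset.Icc (m + 2 - j) (j - 1), eps m p)
              • wB (K1 ∪ K2)) := by
  have hP : ∀ L : Finset (Fin m),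
      prodOpF m (Finset.Icc (2 * m + 3 - j) (m + j)) (wB L) =
      if Pset m j (2 * j - m - 2) ⊆ L
      then (∏ k ∈ Finset.range (2 * j - m - 2),
          ((-1:ℂ) ^ ((L.filter (fun x : Fin m => (x:ℕ) < m + 1 - j + k)).card + k)
            * eps m (m + 2 - j + k)))
          • wB (L \ Pset m j (2 * j - m - 2))
      else 0 := by
    intro L
    have h2 : m + j + 1 - (2 * m + 3 - j) = 2 * j - m - 2 := by omega
    have h1 : (2 * m + 3 - j) = m + j + 1 - (2 * j - m - 2) := by omega
    rw [prodOpF, sortIcc, h2, h1]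
    exact key m j hm hj hjm (2 * j - m - 2) le_rfl L
  have hIdx : IdxF m (Finset.Icc (m + 2 - j) (j - 1)) = Pset m j (2 * j - m - 2) := by
    ext x
    simp only [IdxF, Pset, Finset.mem_filter, Finset.mem_univ, true_and, Finset.mem_Icc]
    omega
  constructor
  · intro L hL
    rw [hIdx] at hL
    rw [hP L, if_neg hL]
  · intro K1 K2 hK1 hK2
    have hK1' : ∀ x ∈ K1, (x:ℕ) + 1 ≤ m + 1 - j := by
      intro x hx
      have := hK1 hx
      simp only [IdxF, Finset.mem_filter, Finset.mem_univ, true_and, Finset.mem_Icc] at this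
      omega
    have hK2' : ∀ x ∈ K2, j ≤ (x:ℕ) + 1 := by
      intro x hx
      have := hK2 hx
      simp only [IdxF, Finset.mem_filter, Finset.mem_univ, true_and, Finset.mem_Icc] at this
      omega
    rw [hIdx, hP]
    set P := Pset m j (2 * j - m - 2) with hPdef
    have hPL : P ⊆ K1 ∪ P ∪ K2 :=
      Finset.subset_union_right.trans Finset.subset_union_left
    rw [if_pos hPL]
    have hLP : (K1 ∪ P ∪ K2) \ P = K1 ∪ K2 := by
      ext x
      simp only [Finset.mem_sdiff, Finset.mem_union, hPdef, Pset, Finset.mem_filter,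
        Finset.mem_univ, true_and]
      constructor
      · rintro ⟨(h | h) | h, hnp⟩
        · exact Or.inl h
        · exact absurd h hnp
        · exact Or.inr h
      · rintro (h | h)
        · exact ⟨Or.inl (Or.inl h), by have := hK1' x h; omega⟩
        · exact ⟨Or.inr h, by have := hK2' x h; omega⟩
    rw [hLP]
    congr 1
    have hfilk : ∀ k ∈ Finset.range (2 * j - m - 2),
        (((K1 ∪ P ∪ K2).filter (fun x : Fin m => (x:ℕ) < m + 1 - j + k)).card) = K1.card + k := by
      intro k hk
      simp only [Finset.mem_range] at hk
      have heq : (K1 ∪ P ∪ K2).filter (fun x : Fin m => (x:ℕ) < m + 1 - j + k)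
          = K1 ∪ Pset m j k := by
        ext x
        simp only [Finset.mem_filter, Finset.mem_union, hPdef, Pset, Finset.mem_filter,
          Finset.mem_univ, true_and]
        constructor
        · rintro ⟨(h | h) | h, hb⟩
          · exact Or.inl h
          · exact Or.inr ⟨h.1, hb⟩
          · exact absurd hb (by have := hK2' x h; omega)
        · rintro (h | h)
          · exact ⟨Or.inl (Or.inl h), by have := hK1' x h; omega⟩
          · exact ⟨Or.inl (Or.inr ⟨h.1, by omega⟩), by omega⟩
      have hdis : Disjoint K1 (Pset m j k) := by
        rw [Finset.disjoint_left]
        intro x hx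
        simp only [Pset, Finset.mem_filter, Finset.mem_univ, true_and, not_and, not_lt]
        have := hK1' x hx
        omega
      rw [heq, Finset.card_union_of_disjoint hdis, Pset_card m j k (by omega)]
    rw [Finset.prod_congr rfl (fun k hk => by
      rw [hfilk k hk, negOnePow_par (K1.card + k + k) K1.card (by omega)])]
    rw [Finset.prod_mul_distrib, Finset.prod_const, Finset.card_range, ← pow_mul]
    have hIco : Finset.Icc (m + 2 - j) (j - 1) = Finset.Ico (m + 2 - j) j := by
      ext x
      simp only [Finset.mem_Icc, Finset.mem_Ico]
      omega
    have hpar : (K1.card * (2 * j - m - 2)) % 2 = (m * K1.card) % 2 := by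
      have h2 : (2 * j - m - 2) % 2 = m % 2 := by omega
      rw [Nat.mul_mod, h2, ← Nat.mul_mod, Nat.mul_comm]
    have hprod : (∏ x ∈ Finset.range (2 * j - m - 2), eps m (m + 2 - j + x))
        = ∏ p ∈ Finset.Icc (m + 2 - j) (j - 1), eps m p := by
      rw [hIco, Finset.prod_Ico_eq_prod_range, show j - (m + 2 - j) = 2 * j - m - 2 by omega]
    rw [negOnePow_par _ _ hpar, hprod]

end
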